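/- arXiv:math/9805010 — 3 statements merged into one kernel-verified Lean document; each statement's English description precedes it below -/
import Mathlib

section
/- Saalschütz' summation formula: let m ∈ ℕ and b, c, e ∈ ℂ with e and e − b − c not nonpositive integers. Then ∑_{k=0}^m (−m)_k (b)_k (c)_k / ((e)_k (−m+b+c−e+1)_k · k!) = (e−b)_m (e−c)_m / ((e)_m (e−b−c)_m). -/
/-!
Put `d = e - b - c`. Reflecting `(-m)_k` and `(-m + b + c - e + 1)_k = (-1)^k (d + m - k)_k` and
splitting `(e)_m`, `(d)_m` turns `(e)_m (d)_m` times the `k`-th summand into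
`C(m,k) (b)_k (c)_k (d)_{m-k} (e+k)_{m-k}`. The sums `S_m(b,c,d,f)` of such terms are polynomial
in all variables and satisfy `S_m(b,c,d,f) = S_m(f-b, f-c, d+b+c-f, f)`, by induction on `m`:
Pascal's rule expresses `S_{m+1}` through `S_m(b,c,d,f)` and `S_m(b,c,d,f+1)`, and a telescoping
contiguous relation trades the latter for `S_m(b+1,c+1,d-1,f+1)`. For `d = e-b-c` and `f = e` the
right side has `d = 0`, so only its last term `(e-b)_m (e-c)_m` survives.
-/

open Complex

/-- Pochhammer symbol `(a)_k = a (a+1) ⋯ (a+k-1)`. -/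
noncomputable def poch (a : ℂ) (k : ℕ) : ℂ := ∏ i ∈ Finset.range k, (a + i)

theorem poch_eq_eval_ascPochhammer (a : ℂ) (k : ℕ) :
    poch a k = (ascPochhammer ℂ k).eval a := by
  induction k with
  | zero => simp [poch]
  | succ k ih => rw [ascPochhammer_succ_eval, ← ih, poch, Finset.prod_range_succ, poch]

@[simp]
theorem poch_zero (a : ℂ) : poch a 0 = 1 := by simp [poch]

theorem poch_succ (a : ℂ) (k : ℕ) : poch a (k + 1) = poch a k * (a + k) :=
  Finset.prod_range_succ _ _

theorem poch_succ_left (a : ℂ) (k : ℕ) : poch a (k + 1) = a * poch (a + 1) k := by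
  simp [poch_eq_eval_ascPochhammer, ascPochhammer_succ_left]

theorem poch_add_one_mul (a : ℂ) (n : ℕ) : a * poch (a + 1) n = poch a n * (a + n) := by
  rw [← poch_succ_left, poch_succ]

theorem poch_add (a : ℂ) (m n : ℕ) : poch a (m + n) = poch a m * poch (a + m) n := by
  simp [poch_eq_eval_ascPochhammer, ← ascPochhammer_mul]

theorem poch_neg (r : ℂ) (k : ℕ) : poch (-r) k = (-1) ^ k * poch (r - k + 1) k := by
  rw [poch_eq_eval_ascPochhammer, poch_eq_eval_ascPochhammer,
    ascPochhammer_eval_neg_eq_descPochhammer, descPochhammer_eval_eq_ascPochhammer]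

theorem poch_neg_natCast (m k : ℕ) :
    poch (-(m : ℂ)) k = (-1) ^ k * (k.factorial * m.choose k) := by
  rw [poch_eq_eval_ascPochhammer, ascPochhammer_eval_neg_eq_descPochhammer,
    descPochhammer_eval_eq_descFactorial, Nat.descFactorial_eq_factorial_mul_choose]
  push_cast; rfl

theorem poch_ne_zero {a : ℂ} (h : ∀ j : ℕ, a ≠ -(j : ℂ)) (k : ℕ) : poch a k ≠ 0 :=
  Finset.prod_ne_zero_iff.mpr fun i _ hi => h i (eq_neg_of_add_eq_zero_left hi)

theorem sum_range_succ_choose_smul {M : Type*} [AddCommMonoid M] (m : ℕ) (A : ℕ → M) :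
    ∑ k ∈ Finset.range (m + 2), (m + 1).choose k • A k =
      ∑ k ∈ Finset.range (m + 1), m.choose k • (A k + A (k + 1)) := by
  have shift : ∑ k ∈ Finset.range (m + 1), m.choose (k + 1) • A (k + 1) + A 0 =
      ∑ k ∈ Finset.range (m + 1), m.choose k • A k := by
    rw [Finset.sum_range_succ, Nat.choose_succ_self, zero_smul, add_zero,
      Finset.sum_range_succ' _ m, Nat.choose_zero_right, one_smul]
  simp only [Finset.sum_range_succ' _ (m + 1), smul_add, Finset.sum_add_distrib, ← shift,
    Nat.choose_succ_succ, add_smul, Nat.choose_zero_right, one_smul]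
  abel

noncomputable def saalschutzTerm (m : ℕ) (b c d f : ℂ) (k : ℕ) : ℂ :=
  poch b k * poch c k * poch d (m - k) * poch (f + k) (m - k)

noncomputable def saalschutzSum (m : ℕ) (b c d f : ℂ) : ℂ :=
  ∑ k ∈ Finset.range (m + 1), m.choose k * saalschutzTerm m b c d f k

theorem saalschutzTerm_succ {m k : ℕ} (hk : k ≤ m) (b c d f : ℂ) :
    saalschutzTerm (m + 1) b c d f k + saalschutzTerm (m + 1) b c d f (k + 1) =
      (f + m) * (d + b + c - f + m) * saalschutzTerm m b c d f k +
        (f - b) * (f - c) * saalschutzTerm m b c d (f + 1) k := by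
  obtain ⟨n, rfl⟩ := Nat.exists_eq_add_of_le hk
  have hn : k + n + 1 - k = n + 1 := by omega
  have hn' : k + n + 1 - (k + 1) = n := by omega
  have hk' : f + ↑(k + 1) = f + 1 + k := by push_cast; ring
  have hf := poch_add_one_mul (f + k) n
  rw [show f + k + 1 = f + 1 + k by ring] at hf
  simp only [saalschutzTerm]
  rw [hn, hn', hk', Nat.add_sub_cancel_left, poch_succ b, poch_succ c, poch_succ d,
    poch_succ (f + k), Nat.cast_add]
  linear_combination poch b k * poch c k * poch d n * (k + b + c - f) * hf

theorem saalschutzSum_succ (m : ℕ) (b c d f : ℂ) :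
    saalschutzSum (m + 1) b c d f =
      (f + m) * (d + b + c - f + m) * saalschutzSum m b c d f +
        (f - b) * (f - c) * saalschutzSum m b c d (f + 1) := by
  simp only [saalschutzSum, ← nsmul_eq_mul]
  rw [sum_range_succ_choose_smul, Finset.mul_sum, Finset.mul_sum, ← Finset.sum_add_distrib]
  refine Finset.sum_congr rfl fun k hk => ?_
  rw [saalschutzTerm_succ (Nat.lt_succ_iff.mp (Finset.mem_range.mp hk))]
  simp only [nsmul_eq_mul]
  ring

theorem saalschutzTerm_contiguous {m k : ℕ} (hk : k ≤ m) (b c d f : ℂ) :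
    m.choose k * ((f + m) * (b + c - f) * saalschutzTerm m b c d f k +
        (f - b) * (f - c) * saalschutzTerm m b c d (f + 1) k -
        b * c * saalschutzTerm m (b + 1) (c + 1) (d - 1) (f + 1) k) =
      ((k + 1 : ℕ) : ℂ) * ((k + 1 : ℕ) + f) * (m.choose (k + 1) *
          saalschutzTerm m b c d (f + 1) (k + 1)) -
        k * (k + f) * (m.choose k * saalschutzTerm m b c d (f + 1) k) := by
  obtain ⟨n, rfl⟩ := Nat.exists_eq_add_of_le hk
  have hbc : b * c * (poch (b + 1) k * poch (c + 1) k) =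
      poch b k * poch c k * (b + k) * (c + k) := by
    linear_combination c * poch (c + 1) k * poch_add_one_mul b k +
      poch b k * (b + k) * poch_add_one_mul c k
  rcases n with _ | n
  · simp only [saalschutzTerm, Nat.add_zero, Nat.sub_self, poch_zero, Nat.choose_self,
      Nat.choose_succ_self]
    push_cast
    linear_combination -hbc
  · have hn : k + (n + 1) - (k + 1) = n := by omega
    have hk' : f + 1 + ↑(k + 1) = f + 1 + k + 1 := by push_cast; ring
    have hchoose : ((k + (n + 1)).choose (k + 1) : ℂ) * (k + 1) =
        (k + (n + 1)).choose k * (n + 1) := by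
      have := Nat.choose_succ_right_eq (k + (n + 1)) k
      rw [Nat.add_sub_cancel_left] at this
      exact_mod_cast this
    have hf := poch_add_one_mul (f + k) (n + 1)
    rw [show f + k + 1 = f + 1 + k by ring, poch_succ_left (f + 1 + k)] at hf
    have hd : poch (d - 1) (n + 1) = (d - 1) * poch d n := by
      rw [poch_succ_left, sub_add_cancel]
    simp only [saalschutzTerm]
    rw [hn, hk', Nat.add_sub_cancel_left, hd, poch_succ_left (f + 1 + k), poch_succ d,
      poch_succ b k, poch_succ c k]
    set C : ℂ := ((k + (n + 1)).choose k : ℂ)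
    set Q := poch (f + 1 + k + 1) n
    push_cast at hf ⊢
    linear_combination -(C * (d - 1) * poch d n * (f + 1 + k) * Q) * hbc
      - (k + 1 + f) * poch b k * poch c k * (b + k) * (c + k) * poch d n * Q * hchoose
      - C * (b + c - f) * poch b k * poch c k * poch d n * (d + n) * hf

theorem saalschutzSum_contiguous (m : ℕ) (b c d f : ℂ) :
    (f + m) * (b + c - f) * saalschutzSum m b c d f +
        (f - b) * (f - c) * saalschutzSum m b c d (f + 1) =
      b * c * saalschutzSum m (b + 1) (c + 1) (d - 1) (f + 1) := by
  set G : ℕ → ℂ := fun j => j * (j + f) * (m.choose j * saalschutzTerm m b c d (f + 1) j)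
  have htel : (f + m) * (b + c - f) * saalschutzSum m b c d f +
      (f - b) * (f - c) * saalschutzSum m b c d (f + 1) -
      b * c * saalschutzSum m (b + 1) (c + 1) (d - 1) (f + 1) =
        ∑ k ∈ Finset.range (m + 1), (G (k + 1) - G k) := by
    simp only [saalschutzSum, Finset.mul_sum, ← Finset.sum_add_distrib,
      ← Finset.sum_sub_distrib]
    refine Finset.sum_congr rfl fun k hk => ?_
    rw [← saalschutzTerm_contiguous (Nat.lt_succ_iff.mp (Finset.mem_range.mp hk))]
    ring
  have hG : G (m + 1) = G 0 := by simp [G, Nat.choose_succ_self]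
  rwa [Finset.sum_range_sub, hG, sub_self, sub_eq_zero] at htel

theorem saalschutzSum_symm (m : ℕ) : ∀ b c d f : ℂ,
    saalschutzSum m b c d f = saalschutzSum m (f - b) (f - c) (d + b + c - f) f := by
  induction m with
  | zero => intro b c d f; simp [saalschutzSum, saalschutzTerm]
  | succ m ih =>
    intro b c d f
    have hshift := ih (b + 1) (c + 1) (d - 1) (f + 1)
    rw [show f + 1 - (b + 1) = f - b by ring, show f + 1 - (c + 1) = f - c by ring,
      show d - 1 + (b + 1) + (c + 1) - (f + 1) = d + b + c - f by ring] at hshift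
    rw [saalschutzSum_succ, saalschutzSum_succ, ← ih, show f - (f - b) = b by ring,
      show f - (f - c) = c by ring, ← hshift]
    linear_combination saalschutzSum_contiguous m b c d f

theorem saalschutzSum_zero_left (m : ℕ) (b c f : ℂ) :
    saalschutzSum m b c 0 f = poch b m * poch c m := by
  rw [saalschutzSum, Finset.sum_range_succ, Finset.sum_eq_zero]
  · simp [saalschutzTerm]
  · intro k hk
    obtain ⟨n, hn⟩ := Nat.exists_eq_add_of_lt (Finset.mem_range.mp hk)
    rw [saalschutzTerm, show m - k = n + 1 by omega, poch_succ_left, zero_mul]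
    simp

theorem saalschutz_summand_eq {m k : ℕ} (hk : k ≤ m) {b c e : ℂ} (he : poch e m ≠ 0)
    (hd : poch (e - b - c) m ≠ 0) :
    poch (-(m : ℂ)) k * poch b k * poch c k /
        (poch e k * poch (-(m : ℂ) + b + c - e + 1) k * (Nat.factorial k : ℂ)) =
      m.choose k * saalschutzTerm m b c (e - b - c) e k / (poch e m * poch (e - b - c) m) := by
  obtain ⟨n, rfl⟩ := Nat.exists_eq_add_of_le hk
  have hrefl :
      poch (-((k + n : ℕ) : ℂ) + b + c - e + 1) k = (-1) ^ k * poch (e - b - c + n) k := by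
    rw [show -((k + n : ℕ) : ℂ) + b + c - e + 1 = -(e - b - c + (k + n) - 1) by push_cast; ring,
      poch_neg]
    congr 2
    ring
  have he' := poch_add e k n
  have hd' : poch (e - b - c) (k + n) = poch (e - b - c) n * poch (e - b - c + n) k := by
    rw [add_comm k n, poch_add]
  obtain ⟨he₁, he₂⟩ := mul_ne_zero_iff.mp (he' ▸ he)
  obtain ⟨hd₁, hd₂⟩ := mul_ne_zero_iff.mp (hd' ▸ hd)
  simp only [saalschutzTerm, Nat.add_sub_cancel_left]
  rw [poch_neg_natCast, hrefl, he', hd']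
  have hfact : (Nat.factorial k : ℂ) ≠ 0 := by exact_mod_cast Nat.factorial_ne_zero k
  field_simp

/-- Saalschütz' summation formula. -/
theorem saalschutz_summation (m : ℕ) (b c e : ℂ)
    (he : ∀ j : ℕ, e ≠ -(j : ℂ)) (hebc : ∀ j : ℕ, e - b - c ≠ -(j : ℂ)) :
    ∑ k ∈ Finset.range (m + 1),
      poch (-(m : ℂ)) k * poch b k * poch c k /
        (poch e k * poch (-(m : ℂ) + b + c - e + 1) k * (Nat.factorial k : ℂ)) =
    poch (e - b) m * poch (e - c) m / (poch e m * poch (e - b - c) m) := by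
  rw [Finset.sum_congr rfl fun k hk => saalschutz_summand_eq
      (Nat.lt_succ_iff.mp (Finset.mem_range.mp hk)) (poch_ne_zero he m) (poch_ne_zero hebc m),
    ← Finset.sum_div, ← saalschutzSum, saalschutzSum_symm,
    show e - b - c + b + c - e = 0 by ring, saalschutzSum_zero_left]
end

section
/- WZ certificate for Gauss' summation: let a, b, c ∈ ℂ and n, k ∈ ℕ. Define F(n,k) := Γ(a+k) Γ(b+k) Γ(c+n−a) Γ(c+n−b) / (Γ(1+k) Γ(c+n+k) Γ(a) Γ(b) Γ(c+n−a−b)) and G(n,k) := (k/(c+n−a−b)) · F(n,k). Assume that none of a+k, b+k, c+n−a, c+n−b, c+n+1−a, c+n+1−b, c+n+k, c+n+1+k, c+n−a−b, c+n+1−a−b, a, b is a nonpositive integer. Then F(n+1,k) − F(n,k) = G(n,k+1) − G(n,k). -/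
open Complex

/-- The WZ pair `F` for Gauss' summation. -/
noncomputable def Fwz (a b c : ℂ) (n k : ℕ) : ℂ :=
  Complex.Gamma (a + k) * Complex.Gamma (b + k) * Complex.Gamma (c + n - a) *
      Complex.Gamma (c + n - b) /
    (Complex.Gamma (1 + k) * Complex.Gamma (c + n + k) * Complex.Gamma a *
      Complex.Gamma b * Complex.Gamma (c + n - a - b))

/-- The WZ pair `G` for Gauss' summation. -/
noncomputable def Gwz (a b c : ℂ) (n k : ℕ) : ℂ :=
  (k : ℂ) / (c + n - a - b) * Fwz a b c n k

/- Both sides are `F(n,k)` times a rational function of `n` and `k`: the Gamma recurrence turns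
the shifts `n ↦ n + 1` and `k ↦ k + 1` into explicit rational factors, after which the WZ
equation becomes the identity `gauss_WZ_ratio_identity` between these factors. -/

lemma Fwz_succ_left {a b c : ℂ} {n : ℕ} (k : ℕ) (ha : c + n - a ≠ 0) (hb : c + n - b ≠ 0)
    (hk : c + n + k ≠ 0) (hab : c + n - a - b ≠ 0) :
    Fwz a b c (n + 1) k =
      (c + n - a) * (c + n - b) / ((c + n + k) * (c + n - a - b)) * Fwz a b c n k := by
  simp only [Fwz]
  rw [show c + ((n + 1 : ℕ) : ℂ) - a - b = c + n - a - b + 1 by push_cast; ring,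
    show c + ((n + 1 : ℕ) : ℂ) - a = c + n - a + 1 by push_cast; ring,
    show c + ((n + 1 : ℕ) : ℂ) - b = c + n - b + 1 by push_cast; ring,
    show c + ((n + 1 : ℕ) : ℂ) + k = c + n + k + 1 by push_cast; ring,
    Gamma_add_one _ ha, Gamma_add_one _ hb, Gamma_add_one _ hk, Gamma_add_one _ hab]
  simp only [div_eq_mul_inv, mul_inv]
  ring

lemma Fwz_succ_right {a b c : ℂ} (n : ℕ) {k : ℕ} (ha : a + k ≠ 0) (hb : b + k ≠ 0)
    (hk : c + n + k ≠ 0) :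
    Fwz a b c n (k + 1) = (a + k) * (b + k) / ((1 + k) * (c + n + k)) * Fwz a b c n k := by
  simp only [Fwz]
  rw [show a + ((k + 1 : ℕ) : ℂ) = a + k + 1 by push_cast; ring,
    show b + ((k + 1 : ℕ) : ℂ) = b + k + 1 by push_cast; ring,
    show 1 + ((k + 1 : ℕ) : ℂ) = 1 + k + 1 by push_cast; ring,
    show c + n + ((k + 1 : ℕ) : ℂ) = c + n + k + 1 by push_cast; ring,
    Gamma_add_one _ ha, Gamma_add_one _ hb, Gamma_add_one _ hk,
    Gamma_add_one _ (by rw [add_comm]; exact Nat.cast_add_one_ne_zero k)]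
  simp only [div_eq_mul_inv, mul_inv]
  ring

lemma gauss_WZ_ratio_identity {a b u t : ℂ} (hk : u + t ≠ 0) (hab : u - a - b ≠ 0)
    (ht : 1 + t ≠ 0) :
    (u - a) * (u - b) / ((u + t) * (u - a - b)) - 1 =
      (t + 1) / (u - a - b) * ((a + t) * (b + t) / ((1 + t) * (u + t))) - t / (u - a - b) := by
  field_simp
  ring

/-- WZ certificate for Gauss' summation. -/
theorem gauss_WZ (a b c : ℂ) (n k : ℕ)
    (h : ∀ z ∈ [a + k, b + k, c + n - a, c + n - b, c + n + 1 - a, c + n + 1 - b,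
        c + n + k, c + n + 1 + k, c + n - a - b, c + n + 1 - a - b, a, b],
      ∀ j : ℕ, z ≠ -(j : ℂ)) :
    Fwz a b c (n + 1) k - Fwz a b c n k = Gwz a b c n (k + 1) - Gwz a b c n k := by
  simp only [List.forall_mem_cons, List.not_mem_nil, IsEmpty.forall_iff, implies_true] at h
  obtain ⟨hak, hbk, hna, hnb, -, -, hnk, -, hnab, -⟩ := h
  replace hak : a + k ≠ 0 := by simpa using hak 0
  replace hbk : b + k ≠ 0 := by simpa using hbk 0
  replace hna : c + n - a ≠ 0 := by simpa using hna 0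
  replace hnb : c + n - b ≠ 0 := by simpa using hnb 0
  replace hnk : c + n + k ≠ 0 := by simpa using hnk 0
  replace hnab : c + n - a - b ≠ 0 := by simpa using hnab 0
  have h1k : (1 : ℂ) + k ≠ 0 := by rw [add_comm]; exact Nat.cast_add_one_ne_zero k
  rw [Gwz, Gwz, Fwz_succ_left k hna hnb hnk hnab, Fwz_succ_right n hak hbk hnk]
  push_cast
  linear_combination Fwz a b c n k * gauss_WZ_ratio_identity hnk hnab h1k
end

section
/- Let a, b, c, e ∈ ℂ with Re(e − a − b) > 0 and with e, c, a+b+c−e+1 not nonpositive integers. Then lim_{n→∞} ∑_{k=0}^∞ (a)_k (b)_k (c+n)_k / ((e)_k (a+b+c−e+1+n)_k · k!) = ∑_{k=0}^∞ (a)_k (b)_k / ((e)_k · k!), where all series involved converge absolutely. -/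
/-!
With `d = a + b + c - e + 1`, the `n`-th series has terms `∏_{i<k} τ i * (c+n+i)/(d+n+i)` and
the limit series has terms `∏_{i<k} τ i`, where `τ i = (a+i)(b+i)/((e+i)(i+1))`. All three
series converge by Raabe's test: `k (‖τ k‖ - 1) → Re (a + b - e) - 1 < -1`, and the extra
factor shifts this by `Re (c - d) = Re (e - a - b) - 1`, giving `-2`. For the limit we use
dominated convergence for series: each factor `(c+n+i)/(d+n+i)` tends to `1`, and for
`n ≥ ‖d‖ + 1` it is bounded by `1 + ρ/(i+1) + O((i+1)⁻²)` with
`ρ = max (Re (c - d)) 0 < Re (e - a - b)`, so that the dominating products still pass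
Raabe's test.
-/

open Complex Filter

open Finset Topology

def HasRaabeLimit (r : ℕ → ℝ) (L : ℝ) : Prop :=
  Tendsto (fun k : ℕ => (k : ℝ) * (r k - 1)) atTop (𝓝 L)

namespace HasRaabeLimit

variable {r s : ℕ → ℝ} {L M : ℝ}

theorem congr' (h : HasRaabeLimit r L) (hrs : r =ᶠ[atTop] s) : HasRaabeLimit s L :=
  Tendsto.congr' (hrs.mono fun k hk => by rw [hk]) h

theorem tendsto_one (h : HasRaabeLimit r L) : Tendsto r atTop (𝓝 1) := by
  have hinv : Tendsto (fun k : ℕ => (k : ℝ)⁻¹) atTop (𝓝 0) :=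
    tendsto_inv_atTop_zero.comp tendsto_natCast_atTop_atTop
  have h0 : Tendsto (fun k => r k - 1) atTop (𝓝 0) := by
    refine (mul_zero L ▸ Tendsto.mul h hinv).congr' ?_
    filter_upwards [eventually_ne_atTop 0] with k hk
    field_simp
  simpa using h0.add_const 1

theorem mul (hr : HasRaabeLimit r L) (hs : HasRaabeLimit s M) : HasRaabeLimit (r * s) (L + M) := by
  refine (mul_one L ▸ (Tendsto.mul hr hs.tendsto_one).add hs).congr fun k => ?_
  simp only [Pi.mul_apply]
  ring

theorem inv (h : HasRaabeLimit r L) : HasRaabeLimit r⁻¹ (-L) := by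
  have h1 := h.tendsto_one
  have h2 := Tendsto.mul (Tendsto.neg h) (h1.inv₀ one_ne_zero)
  rw [inv_one, mul_one] at h2
  refine h2.congr' ?_
  filter_upwards [h1.eventually_ne one_ne_zero] with k hk
  simp only [Pi.inv_apply]
  field_simp
  ring

theorem div (hr : HasRaabeLimit r L) (hs : HasRaabeLimit s M) : HasRaabeLimit (r / s) (L - M) := by
  simpa only [div_eq_mul_inv, sub_eq_add_neg] using hr.mul hs.inv

theorem eventually_le_div_rpow (h : HasRaabeLimit r L) {p : ℝ} (hp : 1 ≤ p) (hLp : L < -p) :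
    ∀ᶠ k : ℕ in atTop, r k ≤ ((k : ℝ) / (k + 1)) ^ p := by
  filter_upwards [h.eventually (eventually_lt_nhds hLp), eventually_gt_atTop 0] with k hk hk0
  have hk0 : (0 : ℝ) < k := Nat.cast_pos.2 hk0
  have hr : r k ≤ 1 + p * -(1 / (k + 1)) := by
    rw [← sub_nonneg]
    have : p * k ≤ p * (k + 1) := by nlinarith
    field_simp
    nlinarith
  have hbern := one_add_mul_self_le_rpow_one_add (s := -(1 / ((k : ℝ) + 1)))
    (by rw [neg_le_neg_iff]; exact div_le_one_of_le₀ (by linarith) (by linarith)) hp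
  calc r k ≤ 1 + p * -(1 / (k + 1)) := hr
    _ ≤ _ := hbern
    _ = _ := by congr 1; field_simp; ring

end HasRaabeLimit

theorem summable_of_eventually_le_mul_div_rpow {u : ℕ → ℝ} (hu : ∀ k, 0 ≤ u k) {p : ℝ}
    (hp : 1 < p) (h : ∀ᶠ k : ℕ in atTop, u (k + 1) ≤ u k * ((k : ℝ) / (k + 1)) ^ p) :
    Summable u := by
  -- `u k * k ^ p` is eventually antitone, hence eventually bounded
  have hanti :
      ∀ᶠ k : ℕ in atTop, u (k + 1) * ((k + 1 : ℕ) : ℝ) ^ p ≤ u k * (k : ℝ) ^ p := by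
    filter_upwards [h] with k hk
    have hk1 : (0 : ℝ) < (k + 1 : ℕ) := by positivity
    calc u (k + 1) * ((k + 1 : ℕ) : ℝ) ^ p
        ≤ u k * ((k : ℝ) / (k + 1)) ^ p * ((k + 1 : ℕ) : ℝ) ^ p := by gcongr
      _ = u k * (k : ℝ) ^ p := by
        rw [Real.div_rpow (Nat.cast_nonneg k) (by positivity), mul_assoc, Nat.cast_succ,
          div_mul_cancel₀ _ (Real.rpow_pos_of_pos (by positivity) p).ne']
  obtain ⟨K, hK⟩ := (hanti.and (eventually_gt_atTop 0)).exists_forall_of_atTop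
  have hbound : ∀ k, K ≤ k → u k * (k : ℝ) ^ p ≤ u K * (K : ℝ) ^ p := by
    refine Nat.le_induction le_rfl fun k hk ih => ?_
    exact ((hK k hk).1).trans ih
  refine Summable.of_norm_bounded_eventually_nat
    ((Real.summable_nat_rpow_inv.2 hp).mul_left (u K * (K : ℝ) ^ p)) ?_
  filter_upwards [eventually_ge_atTop K] with k hk
  have hk0 : (0 : ℝ) < (k : ℝ) ^ p := Real.rpow_pos_of_pos (Nat.cast_pos.2 ((hK k hk).2)) p
  rw [Real.norm_of_nonneg (hu k), ← div_eq_mul_inv, le_div_iff₀ hk0]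
  exact hbound k hk

theorem HasRaabeLimit.summable_prod_range {r : ℕ → ℝ} {L : ℝ} (hr : ∀ k, 0 ≤ r k)
    (h : HasRaabeLimit r L) (hL : L < -1) : Summable fun k => ∏ i ∈ range k, r i := by
  refine summable_of_eventually_le_mul_div_rpow (fun k => prod_nonneg fun i _ => hr i)
    (p := (1 - L) / 2) (by linarith) ?_
  filter_upwards [h.eventually_le_div_rpow (p := (1 - L) / 2) (by linarith) (by linarith)]
    with k hk
  rw [prod_range_succ]
  exact mul_le_mul_of_nonneg_left hk (prod_nonneg fun i _ => hr i)

theorem norm_add_natCast_le (x : ℂ) {k : ℕ} (hk : 0 < x.re + k) :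
    ‖x + k‖ ≤ x.re + k + x.im ^ 2 / (x.re + k) := by
  refine le_of_pow_le_pow_left₀ two_ne_zero (by positivity) ?_
  rw [Complex.sq_norm, Complex.normSq_apply]
  simp only [add_re, natCast_re, add_im, natCast_im, add_zero]
  have : 0 ≤ (x.im ^ 2 / (x.re + k)) ^ 2 := sq_nonneg _
  field_simp
  nlinarith

theorem tendsto_norm_add_natCast_sub_natCast (x : ℂ) :
    Tendsto (fun k : ℕ => ‖x + k‖ - k) atTop (𝓝 x.re) := by
  have hden : Tendsto (fun k : ℕ => x.re + k) atTop atTop :=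
    tendsto_atTop_add_const_left _ _ tendsto_natCast_atTop_atTop
  have hupper := tendsto_const_nhds (x := x.re).add
    ((tendsto_const_nhds (x := x.im ^ 2)).div_atTop hden)
  rw [add_zero] at hupper
  refine tendsto_of_tendsto_of_tendsto_of_le_of_le' tendsto_const_nhds hupper
    (Eventually.of_forall fun k => ?_) ?_
  · have := Complex.re_le_norm (x + k)
    simp only [add_re, natCast_re] at this
    linarith
  · filter_upwards [hden.eventually_gt_atTop 0] with k hk
    have := norm_add_natCast_le x hk
    linarith

theorem hasRaabeLimit_norm_add_natCast_div_natCast (x : ℂ) :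
    HasRaabeLimit (fun k : ℕ => ‖x + k‖ / k) x.re := by
  refine (tendsto_norm_add_natCast_sub_natCast x).congr' ?_
  filter_upwards [eventually_ne_atTop 0] with k hk
  field_simp

theorem hasRaabeLimit_norm_add_div_norm_add (x y : ℂ) :
    HasRaabeLimit (fun k : ℕ => ‖x + k‖ / ‖y + k‖) (x.re - y.re) := by
  refine ((hasRaabeLimit_norm_add_natCast_div_natCast x).div
    (hasRaabeLimit_norm_add_natCast_div_natCast y)).congr' ?_
  filter_upwards [eventually_ne_atTop 0] with k hk
  exact div_div_div_cancel_right₀ (Nat.cast_ne_zero.2 hk) _ _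

theorem hasRaabeLimit_norm_hypergeometric_ratio (a b e : ℂ) :
    HasRaabeLimit (fun i : ℕ => ‖(a + i) * (b + i) / ((e + i) * (i + 1))‖)
      (a.re + b.re - e.re - 1) := by
  convert (hasRaabeLimit_norm_add_div_norm_add a e).mul (hasRaabeLimit_norm_add_div_norm_add b 1)
    using 1
  · ext i
    simp only [Pi.mul_apply, norm_div, norm_mul, add_comm (1 : ℂ)]
    ring
  · simp only [one_re]
    ring

theorem norm_one_add_le (u : ℂ) : ‖1 + u‖ ≤ 1 + u.re + ‖u‖ ^ 2 / 2 := by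
  have hre := Complex.abs_re_le_norm u
  have hpos : 0 ≤ 1 + u.re + ‖u‖ ^ 2 / 2 := by
    nlinarith [abs_le.1 hre, sq_nonneg (‖u‖ - 1)]
  refine le_of_pow_le_pow_left₀ two_ne_zero hpos ?_
  have hsq : ‖1 + u‖ ^ 2 = 1 + 2 * u.re + ‖u‖ ^ 2 := by
    simp only [Complex.sq_norm, Complex.normSq_apply, add_re, add_im, one_re, one_im]
    ring
  rw [hsq]
  nlinarith [sq_nonneg (u.re + ‖u‖ ^ 2 / 2)]

/-- Majorant of `‖(c + n + i) / (d + n + i)‖`, uniform in `n ≥ ‖d‖ + 1`. -/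
noncomputable def ratioMajorant (c d : ℂ) (i : ℕ) : ℝ :=
  1 + max (c - d).re 0 / (i + 1) + (‖c - d‖ * ‖d‖ + ‖c - d‖ ^ 2 / 2) / (i + 1) ^ 2

theorem ratioMajorant_nonneg (c d : ℂ) (i : ℕ) : 0 ≤ ratioMajorant c d i := by
  unfold ratioMajorant
  positivity

theorem hasRaabeLimit_ratioMajorant (c d : ℂ) :
    HasRaabeLimit (ratioMajorant c d) (max (c - d).re 0) := by
  set ρ := max (c - d).re 0
  set B := ‖c - d‖ * ‖d‖ + ‖c - d‖ ^ 2 / 2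
  have h1 : Tendsto (fun k : ℕ => (k : ℝ) / (k + 1)) atTop (𝓝 1) :=
    tendsto_natCast_div_add_atTop 1
  have h2 := (h1.const_mul ρ).add ((h1.mul tendsto_one_div_add_atTop_nhds_zero_nat).const_mul B)
  rw [mul_one, mul_zero, mul_zero, add_zero] at h2
  refine h2.congr fun k => ?_
  simp only [ratioMajorant]
  field_simp
  ring

theorem norm_add_natCast_div_add_natCast_le (c d : ℂ) {n : ℕ} (hn : ‖d‖ + 1 ≤ n)
    (i : ℕ) :
    ‖(c + n + i) / (d + n + i)‖ ≤ ratioMajorant c d i := by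
  set w := c - d
  set m : ℕ := n + i
  set z := d + m
  have hx : (0 : ℝ) < i + 1 := by positivity
  have hm : (i : ℝ) + 1 ≤ m := by push_cast [m]; linarith [norm_nonneg d]
  have hz : (i : ℝ) + 1 ≤ ‖z‖ := by
    have := norm_sub_le z d
    rw [show z - d = m by ring, Complex.norm_natCast] at this
    push_cast [m] at this
    linarith
  have hz0 : z ≠ 0 := norm_pos_iff.1 (hx.trans_le hz)
  have hm0 : (m : ℂ) ≠ 0 := Nat.cast_ne_zero.2 (by exact_mod_cast (hx.trans_le hm).ne')
  have hsplit : (c + n + i) / (d + n + i) = 1 + (w / m - w * d / (z * m)) := by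
    rw [show c + n + i = w + z by push_cast [w, z, m]; ring,
      show d + n + i = z by push_cast [z, m]; ring]
    field_simp
    ring
  -- `w / m` carries the first-order term; the correction `w d / (z m)` is of second order
  have hre :
      (w / m - w * d / (z * m)).re ≤ max w.re 0 / (i + 1) + ‖w‖ * ‖d‖ / (i + 1) ^ 2 := by
    have h1 : (w / m).re ≤ max w.re 0 / (i + 1) := by
      rw [Complex.div_natCast_re]
      exact (div_le_div_of_nonneg_right (le_max_left _ _) (by positivity)).trans
        (div_le_div_of_nonneg_left (le_max_right _ _) hx hm)
    have h2 : -(w * d / (z * m)).re ≤ ‖w‖ * ‖d‖ / (i + 1) ^ 2 := by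
      refine (neg_le_abs _).trans ((Complex.abs_re_le_norm _).trans ?_)
      rw [norm_div, norm_mul, norm_mul, Complex.norm_natCast, sq]
      gcongr
    rw [sub_re]
    linarith
  have hnorm : ‖w / m - w * d / (z * m)‖ ^ 2 ≤ ‖w‖ ^ 2 / (i + 1) ^ 2 := by
    rw [show w / m - w * d / (z * m) = w / z by field_simp; push_cast [z]; ring, norm_div, div_pow]
    gcongr
  rw [hsplit, ratioMajorant]
  refine (norm_one_add_le _).trans ?_
  have : ‖w‖ ^ 2 / (i + 1) ^ 2 / 2 = ‖w‖ ^ 2 / 2 / ((i : ℝ) + 1) ^ 2 := by ring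
  rw [add_div]
  linarith

theorem tendsto_add_natCast_div_add_natCast (c d : ℂ) :
    Tendsto (fun n : ℕ => (c + n) / (d + n)) atTop (𝓝 1) := by
  have hcob : Tendsto (fun n : ℕ => d + n) atTop (Bornology.cobounded ℂ) :=
    (tendsto_const_add_cobounded d).comp tendsto_natCast_atTop_cobounded
  have h := (tendsto_inv₀_cobounded.comp hcob).const_mul (c - d)
  rw [mul_zero] at h
  have h1 := h.const_add 1
  rw [add_zero] at h1
  refine h1.congr' ?_
  filter_upwards [hcob.eventually_ne_cobounded 0] with n hn
  simp only [Function.comp_apply]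
  field_simp
  ring

theorem tendsto_prod_mul_add_natCast_div (τ : ℕ → ℂ) (c d : ℂ) (k : ℕ) :
    Tendsto (fun n : ℕ => ∏ i ∈ range k, τ i * ((c + n + i) / (d + n + i))) atTop
      (𝓝 (∏ i ∈ range k, τ i)) := by
  refine tendsto_finsetProd _ fun i _ => ?_
  simpa only [mul_one, add_right_comm _ (i : ℂ)] using
    (tendsto_add_natCast_div_add_natCast (c + i) (d + i)).const_mul (τ i)

theorem eventually_norm_prod_mul_add_natCast_div_le (τ : ℕ → ℂ) (c d : ℂ) :
    ∀ᶠ n : ℕ in atTop, ∀ k, ‖∏ i ∈ range k, τ i * ((c + n + i) / (d + n + i))‖ ≤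
      ∏ i ∈ range k, ‖τ i‖ * ratioMajorant c d i := by
  filter_upwards [tendsto_natCast_atTop_atTop.eventually_ge_atTop (‖d‖ + 1)] with n hdn k
  rw [norm_prod]
  refine prod_le_prod (fun i _ => norm_nonneg _) fun i _ => ?_
  rw [norm_mul]
  gcongr
  exact norm_add_natCast_div_add_natCast_le c d hdn i

theorem tendsto_tsum_prod_mul_add_natCast_div {τ : ℕ → ℂ} {c d : ℂ}
    (h : Summable fun k => ∏ i ∈ range k, ‖τ i‖ * ratioMajorant c d i) :
    Tendsto (fun n : ℕ => ∑' k, ∏ i ∈ range k, τ i * ((c + n + i) / (d + n + i))) atTop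
      (𝓝 (∑' k, ∏ i ∈ range k, τ i)) :=
  tendsto_tsum_of_dominated_convergence h (tendsto_prod_mul_add_natCast_div τ c d)
    (eventually_norm_prod_mul_add_natCast_div_le τ c d)

theorem poch_div_poch (x y : ℂ) (k : ℕ) :
    poch x k / poch y k = ∏ i ∈ range k, (x + i) / (y + i) :=
  (prod_div_distrib _ _).symm

theorem poch_mul_poch_div_poch_mul_factorial (a b e : ℂ) (k : ℕ) :
    poch a k * poch b k / (poch e k * k.factorial) =
      ∏ i ∈ range k, (a + i) * (b + i) / ((e + i) * (i + 1)) := by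
  rw [← prod_range_add_one_eq_factorial, Nat.cast_prod]
  push_cast
  simp only [poch, ← prod_mul_distrib, ← prod_div_distrib]

theorem saalschutz_limit_lemma_general (a b c e : ℂ) (hre : 0 < (e - a - b).re) :
    (∀ n : ℕ, Summable fun k : ℕ =>
      ‖poch a k * poch b k * poch (c + n) k /
        (poch e k * poch (a + b + c - e + 1 + n) k * (Nat.factorial k : ℂ))‖) ∧
    (Summable fun k : ℕ => ‖poch a k * poch b k / (poch e k * (Nat.factorial k : ℂ))‖) ∧
    Tendsto (fun n : ℕ =>
        ∑' k : ℕ, poch a k * poch b k * poch (c + n) k /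
          (poch e k * poch (a + b + c - e + 1 + n) k * (Nat.factorial k : ℂ)))
      atTop
      (nhds (∑' k : ℕ, poch a k * poch b k / (poch e k * (Nat.factorial k : ℂ)))) := by
  set d := a + b + c - e + 1
  set τ : ℕ → ℂ := fun i => (a + i) * (b + i) / ((e + i) * (i + 1))
  have ht (k : ℕ) : poch a k * poch b k / (poch e k * k.factorial) = ∏ i ∈ range k, τ i :=
    poch_mul_poch_div_poch_mul_factorial a b e k
  have hF (n k : ℕ) : poch a k * poch b k * poch (c + n) k /
      (poch e k * poch (d + n) k * k.factorial) =
        ∏ i ∈ range k, τ i * ((c + n + i) / (d + n + i)) := by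
    rw [prod_mul_distrib, ← ht, ← poch_div_poch]
    ring
  have hτ := hasRaabeLimit_norm_hypergeometric_ratio a b e
  simp only [sub_re] at hre
  have hcd : (c - d).re = e.re - a.re - b.re - 1 := by simp only [d, sub_re, add_re, one_re]; ring
  refine ⟨fun n => ?_, ?_, ?_⟩
  · simp_rw [hF, norm_prod, norm_mul, norm_div]
    refine (hτ.mul (hasRaabeLimit_norm_add_div_norm_add (c + n) (d + n))).summable_prod_range
      (fun i => by positivity) ?_
    simp only [sub_re] at hcd
    simp only [add_re, natCast_re]
    linarith
  · simp_rw [ht, norm_prod]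
    exact hτ.summable_prod_range (fun _ => norm_nonneg _) (by linarith)
  · simp_rw [hF, ht]
    refine tendsto_tsum_prod_mul_add_natCast_div <|
      (hτ.mul (hasRaabeLimit_ratioMajorant c d)).summable_prod_range
        (fun i => mul_nonneg (norm_nonneg _) (ratioMajorant_nonneg c d i)) ?_
    have := max_lt (show (c - d).re < e.re - a.re - b.re by linarith) hre
    linarith

theorem saalschutz_limit_lemma (a b c e : ℂ) (hre : 0 < (e - a - b).re)
    (he : ∀ m : ℕ, e ≠ -(m : ℂ)) (hc : ∀ m : ℕ, c ≠ -(m : ℂ))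
    (habce : ∀ m : ℕ, a + b + c - e + 1 ≠ -(m : ℂ)) :
    (∀ n : ℕ, Summable fun k : ℕ =>
      ‖poch a k * poch b k * poch (c + n) k /
        (poch e k * poch (a + b + c - e + 1 + n) k * (Nat.factorial k : ℂ))‖) ∧
    (Summable fun k : ℕ => ‖poch a k * poch b k / (poch e k * (Nat.factorial k : ℂ))‖) ∧
    Tendsto (fun n : ℕ =>
        ∑' k : ℕ, poch a k * poch b k * poch (c + n) k /
          (poch e k * poch (a + b + c - e + 1 + n) k * (Nat.factorial k : ℂ)))
      atTop
      (nhds (∑' k : ℕ, poch a k * poch b k / (poch e k * (Nat.factorial k : ℂ)))) :=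
  saalschutz_limit_lemma_general a b c e hre
end
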